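/- Let F be a field of characteristic different from 2 and β ∈ sp_{2n}(F) arbitrary. Then {X ∈ sp_{2n}(F) : tr((X·Y − Y·X)·β) = 0 for all Y ∈ sp_{2n}(F)} = {X ∈ sp_{2n}(F) : X·β = β·X}; in other words, the radical of the alternating form (X,Y) ↦ tr([X,Y]·β) on sp_{2n}(F) is exactly the centralizer of β in sp_{2n}(F). -/

import Mathlib

/-!
By cyclicity of the trace, `tr([X, Y] β) = tr([β, X] Y)`, so `X` lies in the radical exactly
when `[β, X] ∈ sp` is trace-orthogonal to all of `sp`. The trace form is nondegenerate on `sp`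
once `2` can be cancelled: for `Z ∈ sp` and any matrix `A`, the matrix `A + J Aᵀ J` lies in `sp`
and `tr(Z (A + J Aᵀ J)) = 2 tr(Z A)`, so `Z` is trace-orthogonal to every matrix.
-/

open Matrix

/-- The matrix `J = [[0, I'ₙ],[−I'ₙ, 0]]` where `I'ₙ` is the antidiagonal identity. -/
def Jmat (R : Type*) [CommRing R] (n : ℕ) : Matrix (Fin (2*n)) (Fin (2*n)) R :=
  Matrix.of fun i j =>
    if (i : ℕ) + (j : ℕ) = 2*n - 1 then (if (i : ℕ) < n then (1 : R) else -1) else 0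

/-- The symplectic group `Sp_{2n}(R)` as a set of matrices. -/
def SpSet (n : ℕ) (R : Type*) [CommRing R] : Set (Matrix (Fin (2*n)) (Fin (2*n)) R) :=
  {g | IsUnit g.det ∧ g * Jmat R n * gᵀ = Jmat R n}

/-- The symplectic Lie algebra `sp_{2n}(R)` as a set of matrices. -/
def spSet (n : ℕ) (R : Type*) [CommRing R] : Set (Matrix (Fin (2*n)) (Fin (2*n)) R) :=
  {X | X * Jmat R n + Jmat R n * Xᵀ = 0}

section Jmat
variable (R : Type*) [CommRing R] (n : ℕ)

lemma Jmat_apply (i j : Fin (2 * n)) :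
    Jmat R n i j = if j = i.rev then (if (i : ℕ) < n then 1 else -1) else 0 := by
  simp only [Jmat, of_apply, Fin.ext_iff, Fin.val_rev]
  split_ifs <;> first | rfl | (exfalso; omega)

lemma val_rev_lt_iff (i : Fin (2 * n)) : (i.rev : ℕ) < n ↔ ¬ (i : ℕ) < n := by
  rw [Fin.val_rev]; omega

lemma Jmat_mul_self : Jmat R n * Jmat R n = -1 := by
  ext i k
  rw [mul_apply, Finset.sum_eq_single i.rev (fun j _ hj => by simp [Jmat_apply, hj]) (by simp)]
  by_cases hk : k = i
  · subst hk
    by_cases hi : (k : ℕ) < n <;> simp [Jmat_apply, val_rev_lt_iff, hi, -Fin.val_rev]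
  · simp [Jmat_apply, hk, Ne.symm hk]

lemma Jmat_transpose : (Jmat R n)ᵀ = -Jmat R n := by
  ext i j
  by_cases hj : j = i.rev
  · subst hj
    by_cases hi : (i : ℕ) < n <;> simp [Jmat_apply, val_rev_lt_iff, hi, -Fin.val_rev]
  · have hi : i ≠ j.rev := fun h => hj (by rw [h, Fin.rev_rev])
    simp [Jmat_apply, hi, hj]

end Jmat

lemma Matrix.trace_commutator_mul {m R : Type*} [Fintype m] [CommRing R] (X Y β : Matrix m m R) :
    ((X * Y - Y * X) * β).trace = ((β * X - X * β) * Y).trace := by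
  rw [sub_mul, sub_mul, trace_sub, trace_sub, trace_mul_cycle, ← trace_mul_cycle X β Y]

-- `spSet n R` is `spSetOf (Jmat R n)` by definition.
def spSetOf {m R : Type*} [Fintype m] [CommRing R] (J : Matrix m m R) : Set (Matrix m m R) :=
  {X | X * J + J * Xᵀ = 0}

namespace spSetOf
variable {m R : Type*} [Fintype m] [CommRing R] {J X Y Z : Matrix m m R}

lemma mul_transpose_eq (hX : X ∈ spSetOf J) : J * Xᵀ = -(X * J) :=
  eq_neg_of_add_eq_zero_right hX

lemma commutator_mem (hX : X ∈ spSetOf J) (hY : Y ∈ spSetOf J) : X * Y - Y * X ∈ spSetOf J := by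
  have swap (A B : Matrix m m R) (hA : A ∈ spSetOf J) (hB : B ∈ spSetOf J) :
      J * (Bᵀ * Aᵀ) = B * A * J := by
    rw [← mul_assoc, mul_transpose_eq hB, neg_mul, mul_assoc, mul_transpose_eq hA, mul_neg,
      neg_neg, ← mul_assoc]
  show (X * Y - Y * X) * J + J * (X * Y - Y * X)ᵀ = 0
  rw [transpose_sub, transpose_mul, transpose_mul, mul_sub, swap X Y hX hY, swap Y X hY hX, sub_mul]
  abel

variable [DecidableEq m] (hJ : J * J = -1)
include hJ

lemma mul_mul_eq_transpose (hZ : Z ∈ spSetOf J) : J * Z * J = Zᵀ := by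
  rw [mul_assoc, eq_neg_of_add_eq_zero_left hZ, mul_neg, ← mul_assoc, hJ, neg_one_mul, neg_neg]

lemma trace_mul_conj_transpose (hZ : Z ∈ spSetOf J) (A : Matrix m m R) :
    (Z * (J * Aᵀ * J)).trace = (Z * A).trace := by
  calc (Z * (J * Aᵀ * J)).trace = ((J * Z * J) * Aᵀ).trace := by
        rw [← mul_assoc, ← mul_assoc, trace_mul_comm, ← mul_assoc, ← mul_assoc]
    _ = (Z * A).trace := by
        rw [mul_mul_eq_transpose hJ hZ, ← transpose_mul, trace_transpose, trace_mul_comm]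

lemma add_conj_transpose_mem (hJt : Jᵀ = -J) (A : Matrix m m R) : A + J * Aᵀ * J ∈ spSetOf J := by
  show (A + J * Aᵀ * J) * J + J * (A + J * Aᵀ * J)ᵀ = 0
  simp only [transpose_add, transpose_mul, transpose_transpose, hJt, add_mul, mul_add, mul_neg,
    neg_mul, mul_assoc, hJ]
  simp only [← mul_assoc, hJ]
  noncomm_ring

lemma eq_zero_of_forall_trace_mul_eq_zero (hJt : Jᵀ = -J) (h2 : IsLeftRegular (2 : R))
    (hZ : Z ∈ spSetOf J) (h : ∀ Y ∈ spSetOf J, (Z * Y).trace = 0) : Z = 0 := by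
  refine ext_iff_trace_mul_right.mpr fun A => h2 ?_
  have := h _ (add_conj_transpose_mem hJ hJt A)
  rw [mul_add, trace_add, trace_mul_conj_transpose hJ hZ] at this
  simp only [zero_mul, trace_zero, mul_zero]
  linear_combination this

theorem radical_eq_centralizer (hJt : Jᵀ = -J) (h2 : IsLeftRegular (2 : R))
    {β : Matrix m m R} (hβ : β ∈ spSetOf J) :
    {X | X ∈ spSetOf J ∧ ∀ Y ∈ spSetOf J, ((X * Y - Y * X) * β).trace = 0}
      = {X | X ∈ spSetOf J ∧ X * β = β * X} := by
  ext X
  refine and_congr_right fun hX => ⟨fun hrad => ?_, fun hcomm Y _ => ?_⟩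
  · have h : β * X - X * β = 0 :=
      eq_zero_of_forall_trace_mul_eq_zero hJ hJt h2 (commutator_mem hβ hX) fun Y hY => by
        rw [← trace_commutator_mul]; exact hrad Y hY
    exact (sub_eq_zero.mp h).symm
  · rw [trace_commutator_mul, hcomm, sub_self, zero_mul, trace_zero]

end spSetOf

theorem stmt6_general (n : ℕ) (F : Type*) [Field F] (h2 : (2 : F) ≠ 0)
    (β : Matrix (Fin (2*n)) (Fin (2*n)) F) (hβ : β ∈ spSet n F) :
    {X | X ∈ spSet n F ∧ ∀ Y ∈ spSet n F, ((X * Y - Y * X) * β).trace = 0}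
      = {X | X ∈ spSet n F ∧ X * β = β * X} :=
  spSetOf.radical_eq_centralizer (Jmat_mul_self F n) (Jmat_transpose F n)
    (IsLeftCancelMulZero.mul_left_cancel_of_ne_zero h2) hβ

/-- The radical of the alternating form `(X,Y) ↦ tr([X,Y]·β)` on `sp_{2n}(F)` is
exactly the centralizer of `β` in `sp_{2n}(F)`. -/
theorem stmt6 (n : ℕ) (hn : 1 ≤ n) (F : Type*) [Field F] (h2 : (2 : F) ≠ 0)
    (β : Matrix (Fin (2*n)) (Fin (2*n)) F) (hβ : β ∈ spSet n F) :
    {X | X ∈ spSet n F ∧ ∀ Y ∈ spSet n F, ((X * Y - Y * X) * β).trace = 0}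
      = {X | X ∈ spSet n F ∧ X * β = β * X} :=
  stmt6_general n F h2 β hβ
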